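/- arXiv:2001.06474 — 2 statements merged into one kernel-verified Lean document; each statement's English description precedes it below -/
import Mathlib

section
/- Let x ≥ 0 in ℝⁿ, g = ∇f(x), and I₊ = {i : x_i = 0 and g_i > 0} the binding set. Let P be symmetric positive definite and define P̄ by P̄_{ij} = P_{ij} if i,j ∉ I₊ and P̄_{ij} = 0 otherwise. If x is not a stationary point of min f over {x ≥ 0} (i.e., g_F ≠ 0 where g_F is the restriction of g to indices outside I₊), then d = −P̄·g satisfies gᵀ·d < 0. -/
/-!
Masking `P` to the free indices is conjugation by the diagonal 0/1 matrix `D` of those indices,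
so `gᵀ P̄ g = (D g)ᵀ P (D g)`, and `D g = g_F ≠ 0` makes this positive by definiteness of `P`.
-/

open Matrix
open scoped Classical

namespace Matrix

variable {ι R : Type*} [Fintype ι] [DecidableEq ι]

theorem dotProduct_mulVec_diagonal_mul_mul_diagonal [CommSemiring R] (P : Matrix ι ι R)
    (d g : ι → R) : g ⬝ᵥ (diagonal d * P * diagonal d) *ᵥ g = (d * g) ⬝ᵥ P *ᵥ (d * g) := by
  have hleft : g ᵥ* diagonal d = d * g :=
    funext fun i => (vecMul_diagonal g d i).trans (mul_comm _ _)
  have hright : diagonal d *ᵥ g = d * g := funext (mulVec_diagonal d g)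
  rw [← mulVec_mulVec, ← mulVec_mulVec, hright, dotProduct_mulVec, hleft]

theorem of_ite_and_eq_diagonal_mul_mul_diagonal [Semiring R] (p : ι → Prop) [DecidablePred p]
    (P : Matrix ι ι R) :
    (of fun i j => if p i ∧ p j then P i j else 0) =
      diagonal (fun i => if p i then 1 else 0) * P * diagonal (fun i => if p i then 1 else 0) := by
  ext i j
  by_cases hi : p i <;> by_cases hj : p j <;> simp [hi, hj, diagonal_mul, mul_diagonal]

theorem PosDef.dotProduct_mulVec_diagonal_mul_mul_diagonal_pos {P : Matrix ι ι ℝ} (hP : P.PosDef)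
    {d g : ι → ℝ} (hdg : d * g ≠ 0) : 0 < g ⬝ᵥ (diagonal d * P * diagonal d) *ᵥ g := by
  simpa [dotProduct_mulVec_diagonal_mul_mul_diagonal] using hP.dotProduct_mulVec_pos hdg

end Matrix

theorem stmt4_general {n : ℕ}
    (x g : Fin n → ℝ)
    (P : Matrix (Fin n) (Fin n) ℝ) (hP : P.PosDef)
    (Pbar : Matrix (Fin n) (Fin n) ℝ)
    (hPbar : ∀ i j, Pbar i j =
      if ¬(x i = 0 ∧ 0 < g i) ∧ ¬(x j = 0 ∧ 0 < g j) then P i j else 0)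
    (hgF : ∃ i, ¬(x i = 0 ∧ 0 < g i) ∧ g i ≠ 0) :
    g ⬝ᵥ (-(Pbar.mulVec g)) < 0 := by
  set mask : Fin n → ℝ := fun i => if ¬(x i = 0 ∧ 0 < g i) then 1 else 0
  have hPbar_eq : Pbar = diagonal mask * P * diagonal mask := by
    rw [← of_ite_and_eq_diagonal_mul_mul_diagonal]
    ext i j
    exact hPbar i j
  have hmask : mask * g ≠ 0 := by
    obtain ⟨i, hfree, hgi⟩ := hgF
    intro h
    have := congrFun h i
    simp only [mask, Pi.mul_apply, if_pos hfree, one_mul, Pi.zero_apply] at this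
    exact hgi this
  rw [dotProduct_neg, neg_lt_zero, hPbar_eq]
  exact hP.dotProduct_mulVec_diagonal_mul_mul_diagonal_pos hmask

theorem stmt4 {n : ℕ} (f : (Fin n → ℝ) → ℝ) (hf : Differentiable ℝ f)
    (x g : Fin n → ℝ) (hx : ∀ i, 0 ≤ x i)
    (hg : ∀ v, fderiv ℝ f x v = g ⬝ᵥ v)
    (P : Matrix (Fin n) (Fin n) ℝ) (hP : P.PosDef)
    (Pbar : Matrix (Fin n) (Fin n) ℝ)
    (hPbar : ∀ i j, Pbar i j =
      if ¬(x i = 0 ∧ 0 < g i) ∧ ¬(x j = 0 ∧ 0 < g j) then P i j else 0)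
    (hgF : ∃ i, ¬(x i = 0 ∧ 0 < g i) ∧ g i ≠ 0) :
    g ⬝ᵥ (-(Pbar.mulVec g)) < 0 :=
  stmt4_general x g P hP Pbar hPbar hgF
end

section
/- If B₀ = θ̄·P⁻¹ with θ̄ > 0 and P = C·Cᵀ for invertible C, then Cᵀ·B₀·C = θ̄·I. More generally, if B' is the compact L-BFGS matrix built in the scaled space with initial matrix θ̄·I and pairs (C⁻¹s_i, Cᵀy_i), and B is the compact L-BFGS matrix built in the original space with initial matrix θ̄·P⁻¹ and pairs (s_i, y_i), then B' = Cᵀ·B·C. -/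
open Matrix

/-- The compact L-BFGS matrix `B = B₀ − W·M·Wᵀ` built from initial matrix `B₀`
and pair matrices `S`, `Y`, with `W = [Y, B₀S]` and
`M = [[−D, Lᵀ],[L, SᵀB₀S]]⁻¹` where `D` is the diagonal of `SᵀY` and `L` its
strict lower triangle. -/
noncomputable def lbfgsCompact {n m : ℕ} (B₀ : Matrix (Fin n) (Fin n) ℝ)
    (S Y : Matrix (Fin n) (Fin m) ℝ) : Matrix (Fin n) (Fin n) ℝ :=
  let D := Matrix.diagonal (fun i => (Sᵀ * Y) i i)
  let L := Matrix.of (fun i j : Fin m => if (j : ℕ) < (i : ℕ) then (Sᵀ * Y) i j else 0)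
  let W := Matrix.fromCols Y (B₀ * S)
  B₀ - W * (Matrix.fromBlocks (-D) Lᵀ L (Sᵀ * B₀ * S))⁻¹ * Wᵀ

theorem transpose_mul_inv_mul_transpose_mul {n : Type*} [Fintype n] [DecidableEq n]
    {R : Type*} [CommRing R] (C : Matrix n n R) (hC : IsUnit C.det) :
    Cᵀ * (C * Cᵀ)⁻¹ * C = 1 := by
  have hCT : IsUnit Cᵀ.det := by rwa [det_transpose]
  rw [Matrix.mul_inv_rev, ← Matrix.mul_assoc, mul_nonsing_inv _ hCT, Matrix.one_mul,
    nonsing_inv_mul _ hC]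

/-- Under the change of variables `x = A x'` the products `SᵀY` and `SᵀB₀S` are unchanged
and `W = [Y, B₀S]` becomes `Aᵀ W`, so the middle matrix `M` is the same in both spaces. -/
theorem lbfgsCompact_congr {n m : ℕ} (A B₀ : Matrix (Fin n) (Fin n) ℝ) (hA : IsUnit A.det)
    (S Y : Matrix (Fin n) (Fin m) ℝ) :
    lbfgsCompact (Aᵀ * B₀ * A) (A⁻¹ * S) (Aᵀ * Y) = Aᵀ * lbfgsCompact B₀ S Y * A := by
  have hAT : IsUnit Aᵀ.det := by rwa [det_transpose]
  have hSY : (A⁻¹ * S)ᵀ * (Aᵀ * Y) = Sᵀ * Y := by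
    rw [transpose_mul, transpose_nonsing_inv, Matrix.mul_assoc, ← Matrix.mul_assoc Aᵀ⁻¹,
      nonsing_inv_mul _ hAT, Matrix.one_mul]
  have hBS : Aᵀ * B₀ * A * (A⁻¹ * S) = Aᵀ * (B₀ * S) := by
    rw [Matrix.mul_assoc, ← Matrix.mul_assoc A, mul_nonsing_inv _ hA, Matrix.one_mul,
      Matrix.mul_assoc]
  have hSBS : (A⁻¹ * S)ᵀ * (Aᵀ * B₀ * A) * (A⁻¹ * S) = Sᵀ * B₀ * S := by
    rw [Matrix.mul_assoc _ _ (A⁻¹ * S), hBS, transpose_mul, transpose_nonsing_inv,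
      Matrix.mul_assoc, ← Matrix.mul_assoc Aᵀ⁻¹, nonsing_inv_mul _ hAT, Matrix.one_mul,
      Matrix.mul_assoc]
  simp only [lbfgsCompact]
  rw [hSY, hBS, hSBS, ← mul_fromCols, Matrix.mul_sub, Matrix.sub_mul, transpose_mul]
  simp only [Matrix.mul_assoc, transpose_transpose]

theorem stmt12_general {n m : ℕ} (C : Matrix (Fin n) (Fin n) ℝ) (hC : IsUnit C.det)
    (θ : ℝ) (S Y : Matrix (Fin n) (Fin m) ℝ) :
    Cᵀ * (θ • (C * Cᵀ)⁻¹) * C = θ • (1 : Matrix (Fin n) (Fin n) ℝ) ∧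
    lbfgsCompact (θ • (1 : Matrix (Fin n) (Fin n) ℝ)) (C⁻¹ * S) (Cᵀ * Y)
      = Cᵀ * lbfgsCompact (θ • (C * Cᵀ)⁻¹) S Y * C := by
  have hB₀ : Cᵀ * (θ • (C * Cᵀ)⁻¹) * C = θ • (1 : Matrix (Fin n) (Fin n) ℝ) := by
    rw [Matrix.mul_smul, Matrix.smul_mul, transpose_mul_inv_mul_transpose_mul C hC]
  refine ⟨hB₀, ?_⟩
  rw [← hB₀]
  exact lbfgsCompact_congr C _ hC S Y

theorem stmt12 {n m : ℕ} (C : Matrix (Fin n) (Fin n) ℝ) (hC : IsUnit C.det)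
    (θ : ℝ) (hθ : 0 < θ) (S Y : Matrix (Fin n) (Fin m) ℝ) :
    Cᵀ * (θ • (C * Cᵀ)⁻¹) * C = θ • (1 : Matrix (Fin n) (Fin n) ℝ) ∧
    lbfgsCompact (θ • (1 : Matrix (Fin n) (Fin n) ℝ)) (C⁻¹ * S) (Cᵀ * Y)
      = Cᵀ * lbfgsCompact (θ • (C * Cᵀ)⁻¹) S Y * C :=
  stmt12_general C hC θ S Y
end
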